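/- If m is odd then W_g(1) = 2^(m−1)·(1 + k_m(μ)), and if m is even then W_g(1) = 2^(m−1)·(k_m(μ) − 1). -/

import Mathlib

open Finset

/-- Absolute trace-style sum `Tr_n : F → F` for `n = 2m`. -/
def trN (m : ℕ) {F : Type*} [Field F] (x : F) : F :=
  ∑ i ∈ Finset.range (2 * m), x ^ (2 ^ i)

/-- Trace-style sum `Tr_m : F → F` (meant for elements of the subfield `K`). -/
def trM (m : ℕ) {F : Type*} [Field F] (x : F) : F :=
  ∑ i ∈ Finset.range m, x ^ (2 ^ i)

/-- `ε(0) = 1`, `ε(t) = -1` for `t ≠ 0`. -/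
def eps {F : Type*} [Field F] [DecidableEq F] (t : F) : ℤ :=
  if t = 0 then 1 else -1

/-- Kloosterman sum `k_m(μ) = ∑_{x ∈ K, x ≠ 0} χ_m(x + μ x⁻¹)`. -/
def klooM (m : ℕ) {F : Type*} [Field F] [Fintype F] [DecidableEq F] (μ : F) : ℤ :=
  ∑ x ∈ Finset.univ.filter (fun x : F => x ^ (2 ^ m) = x ∧ x ≠ 0),
    eps (trM m (x + μ * x⁻¹))

/-- Kloosterman sum over the big field: `k_n(μ) = ∑_{x ∈ F, x ≠ 0} χ_n(x + μ x⁻¹)`. -/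
def klooN (m : ℕ) {F : Type*} [Field F] [Fintype F] [DecidableEq F] (μ : F) : ℤ :=
  ∑ x ∈ Finset.univ.filter (fun x : F => x ≠ 0), eps (trN m (x + μ * x⁻¹))

/-- Walsh transform of `h : F → F` (with values in `{0,1}`) at `a`. -/
def walsh (m : ℕ) {F : Type*} [Field F] [Fintype F] [DecidableEq F] (h : F → F) (a : F) : ℤ :=
  ∑ x : F, eps (h x + trN m (a * x))

/-- The Boolean function `f_{λ,μ}(x) = Tr_n(λ x^{2^m+1}) + Tr_n(x)·Tr_n(μ x^{2^m-1})`. -/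
def fFun (m : ℕ) {F : Type*} [Field F] (l μ : F) : F → F :=
  fun x => trN m (l * x ^ (2 ^ m + 1)) + trN m x * trN m (μ * x ^ (2 ^ m - 1))

/-- The Boolean function
`g_{λ,μ}(x) = (1 + Tr_n(x))·Tr_n(λ x^{2^m+1}) + Tr_n(x)·Tr_n(μ x^{2^m-1})`. -/
def gFun (m : ℕ) {F : Type*} [Field F] (l μ : F) : F → F :=
  fun x => (1 + trN m x) * trN m (l * x ^ (2 ^ m + 1)) +
    trN m x * trN m (μ * x ^ (2 ^ m - 1))

/-!
Write `q = 2^m`, `U = {u | u^(q+1) = 1}` and `K^* = K \ {0}`. Splitting `W_g(1)` according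
to `Tr_n(x) ∈ {0,1}` writes `2 W_g(1)` as a signed sum of four character sums over `F`. Each is
evaluated through the polar decomposition `F^* = U · K^*`: on `x = u y` one has `x^(q+1) = y^2`,
`Tr_n(x) = Tr_m((u + u⁻¹) y)` and `Tr_n(μ x^(q-1)) = Tr_m(μ (u + u⁻¹)^2)`, so the inner sums
over `y` are additive character sums of `K`. What remains is `∑_{u ∈ U} χ_m(μ (u + u⁻¹)^2)`,
which equals `-k_m(μ)` because `w ↦ w + w⁻¹` maps `(U ∪ K^*) \ {1}` two-to-one onto `K^*`.
The parity of `m` enters only through `Tr_m(1) = m`: the shift `x ↦ x + 1` turns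
`Tr_m(x^(q+1)) + Tr_n(x)` into `Tr_m(x^(q+1)) + Tr_m(1)`.
-/

section Eps

variable {F : Type*} [Field F] [DecidableEq F]

@[simp] lemma eps_zero : eps (0 : F) = 1 := if_pos rfl

@[simp] lemma eps_one : eps (1 : F) = -1 := if_neg one_ne_zero

variable [CharP F 2]

lemma eps_add_one {a : F} (ha : a = 0 ∨ a = 1) : eps (a + 1) = -eps a := by
  rcases ha with rfl | rfl <;> simp [CharTwo.add_self_eq_zero]

lemma two_mul_eps_select {a b t : F} (ha : a = 0 ∨ a = 1) (hb : b = 0 ∨ b = 1)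
    (ht : t = 0 ∨ t = 1) :
    2 * eps ((1 + t) * a + t * b + t) = eps a + eps (a + t) - eps b + eps (b + t) := by
  rcases ht with rfl | rfl
  · simp only [add_zero, zero_mul, one_mul]
    ring
  · rw [CharTwo.add_self_eq_zero, zero_mul, one_mul, zero_add, eps_add_one ha, eps_add_one hb]
    ring

end Eps

section Trace

variable {F : Type*} [Field F] {m : ℕ}

@[simp] lemma trM_zero : trM m (0 : F) = 0 :=
  Finset.sum_eq_zero fun _ _ => zero_pow (by positivity)

@[simp] lemma trN_zero : trN m (0 : F) = 0 :=
  Finset.sum_eq_zero fun _ _ => zero_pow (by positivity)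

lemma trM_one : trM m (1 : F) = m := by
  simp [trM]

lemma trM_sq_of_pow_eq {a : F} (ha : a ^ 2 ^ m = a) : trM m (a ^ 2) = trM m a := by
  have h := (Finset.sum_range_succ' (fun i => a ^ 2 ^ i) m).symm.trans
    (Finset.sum_range_succ _ m)
  simp only [pow_zero, pow_one, ha] at h
  simp only [trM, ← pow_mul, ← pow_succ']
  exact add_right_cancel h

variable [CharP F 2]

lemma trM_add (a b : F) : trM m (a + b) = trM m a + trM m b := by
  simp only [trM, add_pow_char_pow, Finset.sum_add_distrib]

lemma trM_sq (a : F) : trM m a ^ 2 = trM m (a ^ 2) := by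
  simp only [trM, CharTwo.sum_sq, ← pow_mul, mul_comm]

lemma trM_eq_zero_or_eq_one {a : F} (ha : a ^ 2 ^ m = a) : trM m a = 0 ∨ trM m a = 1 := by
  have h : trM m a * (trM m a - 1) = 0 := by
    linear_combination (trM_sq a).trans (trM_sq_of_pow_eq ha)
  exact (mul_eq_zero.mp h).imp id sub_eq_zero.mp

lemma trN_eq_trM_add_pow (x : F) : trN m x = trM m (x + x ^ 2 ^ m) := by
  rw [trM_add, trN, trM, trM, two_mul, Finset.sum_range_add]
  simp only [pow_add, pow_mul]

lemma trN_mul_eq_trM {l z : F} (hl : l + l ^ 2 ^ m = 1) (hz : z ^ 2 ^ m = z) :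
    trN m (l * z) = trM m z := by
  rw [trN_eq_trM_add_pow, mul_pow, hz, ← add_mul, hl, one_mul]

end Trace

section FiniteField

lemma zero_pow_two_pow_sub_one {M₀ : Type*} [MonoidWithZero M₀] {m : ℕ} (hm : 0 < m) :
    (0 : M₀) ^ (2 ^ m - 1) = 0 :=
  zero_pow (Nat.sub_ne_zero_of_lt (Nat.one_lt_two_pow hm.ne'))

lemma two_pow_two_mul_sub_one (m : ℕ) : 2 ^ (2 * m) - 1 = (2 ^ m + 1) * (2 ^ m - 1) := by
  rw [two_mul, pow_add, ← Nat.sq_sub_sq, sq, one_pow]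

variable {F : Type*} [Field F] [Fintype F]

lemma pow_two_pow_pow_two_pow {m : ℕ} (hcard : Fintype.card F = 2 ^ (2 * m)) (x : F) :
    (x ^ 2 ^ m) ^ 2 ^ m = x := by
  rw [← pow_mul, ← pow_add, ← two_mul, ← hcard, FiniteField.pow_card]

variable [DecidableEq F]

lemma card_filter_pow_eq_one_of_dvd {d : ℕ} (hd : d ∣ Fintype.card F - 1) :
    #{x : F | x ^ d = 1} = d := by
  set N := Fintype.card F - 1
  have hN : N ≠ 0 := by
    have := Fintype.one_lt_card (α := F)
    omega
  have hd0 : 0 < d := Nat.pos_of_dvd_of_pos hd (Nat.pos_of_ne_zero hN)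
  obtain ⟨g, hg⟩ := IsCyclic.exists_ofOrder_eq_natCard (α := Fˣ)
  rw [Nat.card_eq_fintype_card, Fintype.card_units] at hg
  have hζ : IsPrimitiveRoot ((g : F) ^ (N / d)) d := by
    have h := (hg ▸ IsPrimitiveRoot.orderOf g).pow_of_dvd
      (Nat.div_pos (Nat.le_of_dvd (Nat.pos_of_ne_zero hN) hd) hd0).ne' (Nat.div_dvd_of_dvd hd)
    rw [Nat.div_div_self hd hN] at h
    exact_mod_cast IsPrimitiveRoot.coe_units_iff.mpr h
  have hroots : ({x : F | x ^ d = 1} : Finset F) = Polynomial.nthRootsFinset d (1 : F) := by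
    ext x
    simp [Polynomial.mem_nthRootsFinset hd0]
  rw [hroots, hζ.card_nthRootsFinset]

def fixedField (m : ℕ) (F : Type*) [Field F] [Fintype F] [DecidableEq F] : Finset F :=
  {x | x ^ 2 ^ m = x}

def fixedFieldUnits (m : ℕ) (F : Type*) [Field F] [Fintype F] [DecidableEq F] : Finset F :=
  {x | x ^ 2 ^ m = x ∧ x ≠ 0}

def unitCircle (m : ℕ) (F : Type*) [Field F] [Fintype F] [DecidableEq F] : Finset F :=
  {x | x ^ (2 ^ m + 1) = 1}

variable {m : ℕ}

@[simp] lemma mem_fixedField {x : F} : x ∈ fixedField m F ↔ x ^ 2 ^ m = x := by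
  simp [fixedField]

@[simp] lemma mem_fixedFieldUnits {x : F} :
    x ∈ fixedFieldUnits m F ↔ x ^ 2 ^ m = x ∧ x ≠ 0 := by
  simp [fixedFieldUnits]

@[simp] lemma mem_unitCircle {x : F} : x ∈ unitCircle m F ↔ x ^ (2 ^ m + 1) = 1 := by
  simp [unitCircle]

lemma insert_zero_fixedFieldUnits : insert 0 (fixedFieldUnits m F) = fixedField m F := by
  ext x
  by_cases hx : x = 0 <;> simp [hx]

lemma ne_zero_of_mem_unitCircle {u : F} (hu : u ∈ unitCircle m F) : u ≠ 0 := by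
  rintro rfl
  simp at hu

lemma ne_zero_of_mem_unitCircle_union {w : F} (hw : w ∈ unitCircle m F ∪ fixedFieldUnits m F) :
    w ≠ 0 := by
  rcases Finset.mem_union.mp hw with hw | hw
  exacts [ne_zero_of_mem_unitCircle hw, (mem_fixedFieldUnits.mp hw).2]

lemma pow_two_pow_of_mem_unitCircle {u : F} (hu : u ∈ unitCircle m F) : u ^ 2 ^ m = u⁻¹ :=
  eq_inv_of_mul_eq_one_left (by rw [← pow_succ, mem_unitCircle.mp hu])

lemma mul_pow_two_pow_add_one {u y : F} (hu : u ∈ unitCircle m F) (hy : y ∈ fixedField m F) :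
    (u * y) ^ (2 ^ m + 1) = y ^ 2 := by
  rw [mul_pow, mem_unitCircle.mp hu, one_mul, pow_succ, mem_fixedField.mp hy, sq]

lemma fixedFieldUnits_eq_filter_pow_eq_one (hm : 0 < m) :
    fixedFieldUnits m F = ({x | x ^ (2 ^ m - 1) = 1} : Finset F) := by
  ext x
  have hq : 2 ^ m = 2 ^ m - 1 + 1 := (Nat.sub_add_cancel Nat.one_le_two_pow).symm
  simp only [mem_fixedFieldUnits, Finset.mem_filter, Finset.mem_univ, true_and]
  constructor
  · rintro ⟨hx, hx0⟩
    rw [hq, pow_succ] at hx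
    exact (mul_eq_right₀ hx0).mp hx
  · intro hx
    have hx0 : x ≠ 0 := by
      rintro rfl
      rw [zero_pow_two_pow_sub_one hm] at hx
      exact zero_ne_one hx
    rw [hq, pow_succ, hx, one_mul]
    exact ⟨rfl, hx0⟩

lemma mul_mem_fixedField {a b : F} (ha : a ∈ fixedField m F) (hb : b ∈ fixedField m F) :
    a * b ∈ fixedField m F := by
  rw [mem_fixedField] at *
  rw [mul_pow, ha, hb]

lemma inv_mem_fixedField {a : F} (ha : a ∈ fixedField m F) : a⁻¹ ∈ fixedField m F := by
  rw [mem_fixedField] at *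
  rw [inv_pow, ha]

lemma mul_mem_fixedFieldUnits {a b : F} (ha : a ∈ fixedFieldUnits m F)
    (hb : b ∈ fixedFieldUnits m F) : a * b ∈ fixedFieldUnits m F := by
  rw [mem_fixedFieldUnits] at *
  exact ⟨by rw [mul_pow, ha.1, hb.1], mul_ne_zero ha.2 hb.2⟩

lemma inv_mem_fixedFieldUnits {a : F} (ha : a ∈ fixedFieldUnits m F) :
    a⁻¹ ∈ fixedFieldUnits m F := by
  rw [mem_fixedFieldUnits] at *
  exact ⟨by rw [inv_pow, ha.1], inv_ne_zero ha.2⟩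

variable (hcard : Fintype.card F = 2 ^ (2 * m))
include hcard

lemma pow_two_pow_add_one_mem_fixedField (x : F) : x ^ (2 ^ m + 1) ∈ fixedField m F := by
  rw [mem_fixedField, pow_succ, mul_pow, pow_two_pow_pow_two_pow hcard, mul_comm]

lemma card_unitCircle : #(unitCircle m F) = 2 ^ m + 1 :=
  card_filter_pow_eq_one_of_dvd (hcard ▸ two_pow_two_mul_sub_one m ▸ dvd_mul_right _ _)

lemma card_fixedFieldUnits (hm : 0 < m) : #(fixedFieldUnits m F) = 2 ^ m - 1 := by
  rw [fixedFieldUnits_eq_filter_pow_eq_one hm]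
  exact card_filter_pow_eq_one_of_dvd (hcard ▸ two_pow_two_mul_sub_one m ▸ dvd_mul_left _ _)

lemma card_fixedField (hm : 0 < m) : #(fixedField m F) = 2 ^ m := by
  rw [← insert_zero_fixedFieldUnits, Finset.card_insert_of_notMem (by simp),
    card_fixedFieldUnits hcard hm, Nat.sub_add_cancel Nat.one_le_two_pow]

end FiniteField

section PolarDecomposition

variable {F : Type*} [Field F]

lemma add_inv_eq_add_inv_iff {v w : F} (hv : v ≠ 0) (hw : w ≠ 0) :
    v + v⁻¹ = w + w⁻¹ ↔ v = w ∨ v = w⁻¹ := by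
  constructor
  · intro h
    have h' : (v - w) * (v * w - 1) = 0 := by
      field_simp at h
      linear_combination h
    refine (mul_eq_zero.mp h').imp sub_eq_zero.mp fun h1 => ?_
    exact eq_inv_of_mul_eq_one_left (sub_eq_zero.mp h1)
  · rintro (rfl | rfl)
    · rfl
    · rw [inv_inv, add_comm]

variable [CharP F 2]

lemma sq_eq_one_iff_of_charTwo {u : F} : u ^ 2 = 1 ↔ u = 1 := by
  simpa using CharTwo.sq_inj (x := u) (y := 1)

lemma add_inv_eq_zero_iff {u : F} (hu : u ≠ 0) : u + u⁻¹ = 0 ↔ u = 1 := by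
  rw [CharTwo.add_eq_zero, ← mul_eq_one_iff_eq_inv₀ hu, ← sq, sq_eq_one_iff_of_charTwo]

variable [Fintype F] [DecidableEq F] {m : ℕ}

lemma unitCircle_inter_fixedFieldUnits : unitCircle m F ∩ fixedFieldUnits m F = {1} := by
  ext x
  simp only [Finset.mem_inter, mem_unitCircle, mem_fixedFieldUnits, Finset.mem_singleton]
  constructor
  · rintro ⟨hU, hK, -⟩
    rwa [pow_succ, hK, ← sq, sq_eq_one_iff_of_charTwo] at hU
  · rintro rfl
    simp

lemma add_mem_fixedField {a b : F} (ha : a ∈ fixedField m F) (hb : b ∈ fixedField m F) :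
    a + b ∈ fixedField m F := by
  rw [mem_fixedField] at *
  rw [add_pow_char_pow, ha, hb]

lemma add_inv_mem_fixedField_of_mem_unitCircle {u : F} (hu : u ∈ unitCircle m F) :
    u + u⁻¹ ∈ fixedField m F := by
  rw [mem_fixedField, add_pow_char_pow, inv_pow, pow_two_pow_of_mem_unitCircle hu, inv_inv,
    add_comm]

lemma sum_fixedField_comp_mul_add {M : Type*} [AddCommMonoid M] {a b : F}
    (ha : a ∈ fixedFieldUnits m F) (hb : b ∈ fixedField m F) (f : F → M) :
    ∑ y ∈ fixedField m F, f (a * y + b) = ∑ y ∈ fixedField m F, f y := by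
  obtain ⟨haK, ha0⟩ := mem_fixedFieldUnits.mp ha
  have ha' : a ∈ fixedField m F := mem_fixedField.mpr haK
  refine Finset.sum_nbij' (fun y => a * y + b) (fun y => a⁻¹ * (y + b)) ?_ ?_ ?_ ?_ ?_
  · exact fun y hy => add_mem_fixedField (mul_mem_fixedField ha' hy) hb
  · exact fun y hy => mul_mem_fixedField (inv_mem_fixedField ha') (add_mem_fixedField hy hb)
  · intro y _
    simp only [CharTwo.add_cancel_right, inv_mul_cancel_left₀ ha0]
  · intro y _
    simp only [mul_inv_cancel_left₀ ha0, CharTwo.add_cancel_right]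
  · exact fun _ _ => rfl

lemma injOn_mul_unitCircle_product_fixedFieldUnits :
    Set.InjOn (fun p : F × F => p.1 * p.2)
      (unitCircle m F ×ˢ fixedFieldUnits m F : Finset (F × F)) := by
  rintro ⟨u, y⟩ hp ⟨u', y'⟩ hp' (h : u * y = u' * y')
  simp only [Finset.coe_product, Set.mem_prod, Finset.mem_coe] at hp hp'
  have hu0 := ne_zero_of_mem_unitCircle hp.1
  have hu'0 := ne_zero_of_mem_unitCircle hp'.1
  have hy0 := (mem_fixedFieldUnits.mp hp.2).2
  have hmem : u'⁻¹ * u ∈ unitCircle m F ∩ fixedFieldUnits m F := by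
    have hyy : u'⁻¹ * u = y' * y⁻¹ := by
      field_simp
      linear_combination h
    simp only [Finset.mem_inter, mem_unitCircle, mem_fixedFieldUnits] at hp hp' ⊢
    refine ⟨by rw [mul_pow, inv_pow, hp.1, hp'.1, inv_one, one_mul], ?_, ?_⟩
    · rw [hyy, mul_pow, inv_pow, hp.2.1, hp'.2.1]
    · exact mul_ne_zero (inv_ne_zero hu'0) hu0
  rw [unitCircle_inter_fixedFieldUnits, Finset.mem_singleton, inv_mul_eq_one₀ hu'0] at hmem
  subst hmem
  rw [Prod.mk.injEq]
  exact ⟨rfl, mul_left_cancel₀ hu0 h⟩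

lemma add_inv_mem_fixedFieldUnits_of_mem_erase_one {w : F}
    (hw : w ∈ (unitCircle m F ∪ fixedFieldUnits m F).erase 1) :
    w + w⁻¹ ∈ fixedFieldUnits m F := by
  obtain ⟨hw1, hw⟩ := Finset.mem_erase.mp hw
  have hwK : w + w⁻¹ ∈ fixedField m F := by
    rcases Finset.mem_union.mp hw with hw | hw
    · exact add_inv_mem_fixedField_of_mem_unitCircle hw
    · have hwK := mem_fixedField.mpr (mem_fixedFieldUnits.mp hw).1
      exact add_mem_fixedField hwK (inv_mem_fixedField hwK)
  refine mem_fixedFieldUnits.mpr ⟨mem_fixedField.mp hwK, ?_⟩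
  exact (add_inv_eq_zero_iff (ne_zero_of_mem_unitCircle_union hw)).not.mpr hw1

variable (hcard : Fintype.card F = 2 ^ (2 * m))
include hcard

omit [DecidableEq F] in
lemma trN_eq_zero_or_eq_one (x : F) : trN m x = 0 ∨ trN m x = 1 := by
  rw [trN_eq_trM_add_pow]
  refine trM_eq_zero_or_eq_one ?_
  rw [add_pow_char_pow, pow_two_pow_pow_two_pow hcard, add_comm]

lemma sum_univ_eq_add_sum_unitCircle_sum_fixedFieldUnits {M : Type*} [AddCommMonoid M]
    (hm : 0 < m) (f : F → M) :
    ∑ x, f x = f 0 + ∑ u ∈ unitCircle m F, ∑ y ∈ fixedFieldUnits m F, f (u * y) := by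
  have hinj := injOn_mul_unitCircle_product_fixedFieldUnits (m := m) (F := F)
  -- Both sides have `(q + 1)(q - 1) = q^2 - 1` elements.
  have himage : (unitCircle m F ×ˢ fixedFieldUnits m F).image (fun p => p.1 * p.2)
      = Finset.univ.erase 0 := by
    refine Finset.eq_of_subset_of_card_le ?_ ?_
    · simp only [Finset.subset_iff, Finset.mem_image, Finset.mem_product, Finset.mem_erase,
        Finset.mem_univ, and_true]
      rintro _ ⟨⟨u, y⟩, ⟨hu, hy⟩, rfl⟩
      exact mul_ne_zero (ne_zero_of_mem_unitCircle hu) (mem_fixedFieldUnits.mp hy).2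
    · rw [Finset.card_image_of_injOn hinj, Finset.card_product, card_unitCircle hcard,
        card_fixedFieldUnits hcard hm, Finset.card_erase_of_mem (Finset.mem_univ _),
        Finset.card_univ, hcard, two_pow_two_mul_sub_one]
  rw [← Finset.add_sum_erase _ f (Finset.mem_univ 0), ← himage, Finset.sum_image hinj,
    Finset.sum_product]

end PolarDecomposition

section AdditiveCharacter

open Polynomial

variable {F : Type*} [Field F] [Fintype F] [DecidableEq F] [CharP F 2] {m : ℕ}
  (hcard : Fintype.card F = 2 ^ (2 * m)) (hm : 0 < m)
include hcard hm

lemma exists_mem_fixedField_trM_eq_one : ∃ y ∈ fixedField m F, trM m y = 1 := by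
  -- Otherwise all `2^m` elements of `K` would be roots of `∑ X^(2^i)`, of degree `2^(m-1)`.
  by_contra! h
  set P : F[X] := ∑ i ∈ Finset.range m, X ^ 2 ^ i
  have hP1 : P.coeff 1 = 1 := by
    rw [finsetSum_coeff, Finset.sum_eq_single 0 (fun i _ hi => ?_) (by simp [hm])]
    · simp
    · rw [coeff_X_pow, if_neg (Nat.one_lt_two_pow hi).ne]
  have hP0 : P ≠ 0 := fun h0 => by simp [h0] at hP1
  have hdeg : P.natDegree < 2 ^ m := by
    refine (natDegree_sum_le_of_forall_le _ _ (n := 2 ^ (m - 1)) fun i hi => ?_).trans_lt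
      (Nat.pow_lt_pow_right (by norm_num) (by omega))
    rw [natDegree_X_pow]
    exact Nat.pow_le_pow_right (by norm_num) (by simp at hi; omega)
  have hroots : fixedField m F ⊆ P.roots.toFinset := fun y hy => by
    rw [Multiset.mem_toFinset, mem_roots hP0, IsRoot, eval_finsetSum]
    simpa [trM] using (trM_eq_zero_or_eq_one (mem_fixedField.mp hy)).resolve_right (h y hy)
  have hle := (Finset.card_le_card hroots).trans
    ((Multiset.toFinset_card_le _).trans (card_roots' P))
  rw [card_fixedField hcard hm] at hle
  omega

lemma sum_fixedField_eps_trM : ∑ y ∈ fixedField m F, eps (trM m y) = 0 := by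
  obtain ⟨y₀, hy₀, h1⟩ := exists_mem_fixedField_trM_eq_one hcard hm
  have h := sum_fixedField_comp_mul_add (a := 1) (by simp) hy₀ (fun y => eps (trM m y))
  simp only [one_mul, trM_add, h1] at h
  rw [Finset.sum_congr rfl fun y hy => eps_add_one (trM_eq_zero_or_eq_one (mem_fixedField.mp hy)),
    Finset.sum_neg_distrib] at h
  omega

lemma sum_fixedField_eps_trM_mul_add {a b : F} (ha : a ∈ fixedField m F)
    (hb : b ∈ fixedField m F) :
    ∑ y ∈ fixedField m F, eps (trM m (a * y + b))
      = if a = 0 then 2 ^ m * eps (trM m b) else 0 := by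
  split_ifs with ha0
  · simp [ha0, card_fixedField hcard hm]
  · rw [sum_fixedField_comp_mul_add (mem_fixedFieldUnits.mpr ⟨mem_fixedField.mp ha, ha0⟩) hb
      (fun z => eps (trM m z)), sum_fixedField_eps_trM hcard hm]

lemma sum_fixedFieldUnits_eps_trM_mul_add {a b : F} (ha : a ∈ fixedField m F)
    (hb : b ∈ fixedField m F) :
    ∑ y ∈ fixedFieldUnits m F, eps (trM m (a * y + b))
      = (if a = 0 then 2 ^ m - 1 else -1) * eps (trM m b) := by
  have h := sum_fixedField_eps_trM_mul_add hcard hm ha hb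
  rw [← insert_zero_fixedFieldUnits, Finset.sum_insert (by simp), mul_zero, zero_add] at h
  split_ifs at h ⊢ <;> linarith

end AdditiveCharacter

section Kloosterman

variable {F : Type*} [Field F] [Fintype F] [DecidableEq F] [CharP F 2] {m : ℕ}
  (hcard : Fintype.card F = 2 ^ (2 * m)) (hm : 0 < m)
include hcard hm

lemma sum_erase_one_comp_add_inv {M : Type*} [AddCommMonoid M] (G : F → M) :
    ∑ w ∈ (unitCircle m F ∪ fixedFieldUnits m F).erase 1, G (w + w⁻¹)
      = 2 • ∑ c ∈ fixedFieldUnits m F, G c := by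
  -- Every fibre of `w ↦ w + w⁻¹` lies in some `{w, w⁻¹}`; as `#S = 2 #K^*`, all are full.
  set S := (unitCircle m F ∪ fixedFieldUnits m F).erase 1
  have hmaps : ∀ w ∈ S, w + w⁻¹ ∈ fixedFieldUnits m F :=
    fun _ => add_inv_mem_fixedFieldUnits_of_mem_erase_one
  have hfiber_le : ∀ c ∈ fixedFieldUnits m F, #{w ∈ S | w + w⁻¹ = c} ≤ 2 := by
    intro c _
    rcases Finset.eq_empty_or_nonempty {w ∈ S | w + w⁻¹ = c} with he | ⟨w₀, hw₀⟩
    · simp [he]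
    obtain ⟨hw₀S, rfl⟩ := Finset.mem_filter.mp hw₀
    refine (Finset.card_le_card (t := {w₀, w₀⁻¹}) fun w hw => ?_).trans Finset.card_le_two
    obtain ⟨hwS, hw⟩ := Finset.mem_filter.mp hw
    have hne : ∀ {v}, v ∈ S → v ≠ 0 :=
      fun hv => ne_zero_of_mem_unitCircle_union (Finset.mem_of_mem_erase hv)
    simpa using (add_inv_eq_add_inv_iff (hne hwS) (hne hw₀S)).mp hw
  have hcardS : #S = 2 * #(fixedFieldUnits m F) := by
    have h := Finset.card_union_add_card_inter (unitCircle m F) (fixedFieldUnits m F)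
    rw [unitCircle_inter_fixedFieldUnits, card_unitCircle hcard, card_fixedFieldUnits hcard hm,
      Finset.card_singleton] at h
    rw [Finset.card_erase_of_mem (Finset.mem_union_left _ (by simp)),
      card_fixedFieldUnits hcard hm]
    have := Nat.one_le_two_pow (n := m)
    omega
  have hfiber : ∀ c ∈ fixedFieldUnits m F, #{w ∈ S | w + w⁻¹ = c} = 2 := by
    refine (Finset.sum_eq_sum_iff_of_le hfiber_le).mp ?_
    rw [← Finset.card_eq_sum_card_fiberwise hmaps, hcardS, Finset.sum_const, smul_eq_mul,
      mul_comm]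
  rw [← Finset.sum_fiberwise_of_maps_to' hmaps, Finset.smul_sum]
  refine Finset.sum_congr rfl fun c hc => ?_
  rw [Finset.sum_const, hfiber c hc]

lemma sum_unitCircle_add_sum_fixedFieldUnits_comp_add_inv {M : Type*} [AddCommMonoid M]
    (G : F → M) :
    ∑ u ∈ unitCircle m F, G (u + u⁻¹) + ∑ w ∈ fixedFieldUnits m F, G (w + w⁻¹)
      = 2 • ∑ c ∈ fixedField m F, G c := by
  have h10 : (1 : F) + 1⁻¹ = 0 := by rw [inv_one, CharTwo.add_self_eq_zero]
  rw [← Finset.sum_union_inter, unitCircle_inter_fixedFieldUnits, Finset.sum_singleton,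
    ← Finset.add_sum_erase _ _ (Finset.mem_union_left _ (by simp : (1 : F) ∈ unitCircle m F)),
    sum_erase_one_comp_add_inv hcard hm, ← insert_zero_fixedFieldUnits,
    Finset.sum_insert (by simp), h10, smul_add, two_smul]
  abel

lemma sum_unitCircle_eps_trM_mul_add_inv_sq {μ : F} (hμ : μ ∈ fixedFieldUnits m F) :
    ∑ u ∈ unitCircle m F, eps (trM m (μ * (u + u⁻¹) ^ 2)) = -klooM m μ := by
  obtain ⟨hμK, hμ0⟩ := mem_fixedFieldUnits.mp hμ
  obtain ⟨ν, rfl⟩ := isSquare_of_charTwo' μ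
  have hν : ν ∈ fixedFieldUnits m F := by
    refine mem_fixedFieldUnits.mpr ⟨?_, by rintro rfl; simp at hμ0⟩
    rw [← CharTwo.sq_inj, ← pow_mul, mul_comm, pow_mul, sq, hμK]
  have hνK : ν ∈ fixedField m F := mem_fixedField.mpr (mem_fixedFieldUnits.mp hν).1
  have hν0 : ν ≠ 0 := (mem_fixedFieldUnits.mp hν).2
  have hU : ∀ u ∈ unitCircle m F,
      eps (trM m (ν * ν * (u + u⁻¹) ^ 2)) = eps (trM m (ν * (u + u⁻¹))) := by
    intro u hu
    rw [← trM_sq_of_pow_eq (mem_fixedField.mp (mul_mem_fixedField hνK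
      (add_inv_mem_fixedField_of_mem_unitCircle hu))), mul_pow, sq ν]
  -- The substitution `x = ν w` turns `x + ν² x⁻¹` into `ν (w + w⁻¹)`.
  have hK : ∑ w ∈ fixedFieldUnits m F, eps (trM m (ν * (w + w⁻¹))) = klooM m (ν * ν) := by
    refine Finset.sum_nbij' (ν * ·) (ν⁻¹ * ·) (fun _ => mul_mem_fixedFieldUnits hν)
      (fun _ => mul_mem_fixedFieldUnits (inv_mem_fixedFieldUnits hν)) (by simp [hν0])
      (by simp [hν0]) fun w hw => ?_
    field_simp [(mem_fixedFieldUnits.mp hw).2]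
  have h := sum_unitCircle_add_sum_fixedFieldUnits_comp_add_inv hcard hm
    (fun c => eps (trM m (ν * c)))
  have h0 : ∑ c ∈ fixedField m F, eps (trM m (ν * c)) = 0 := by
    simpa [hν0] using sum_fixedField_eps_trM_mul_add hcard hm hνK (b := 0) (by simp)
  rw [hK, h0, smul_zero] at h
  rw [Finset.sum_congr rfl hU]
  linear_combination h

end Kloosterman

section WalshSums

variable {F : Type*} [Field F] [Fintype F] [DecidableEq F] [CharP F 2] {m : ℕ}

lemma trN_mul_of_mem_unitCircle {u y : F} (hu : u ∈ unitCircle m F) (hy : y ∈ fixedField m F) :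
    trN m (u * y) = trM m ((u + u⁻¹) * y) := by
  rw [trN_eq_trM_add_pow, mul_pow, pow_two_pow_of_mem_unitCircle hu, mem_fixedField.mp hy,
    add_mul]

lemma trN_mul_mul_pow_two_pow_sub_one {μ u y : F} (hμ : μ ∈ fixedField m F)
    (hu : u ∈ unitCircle m F) (hy : y ∈ fixedFieldUnits m F) :
    trN m (μ * (u * y) ^ (2 ^ m - 1)) = trM m (μ * (u + u⁻¹) ^ 2) := by
  obtain ⟨hyK, hy0⟩ := mem_fixedFieldUnits.mp hy
  have hu0 := ne_zero_of_mem_unitCircle hu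
  have hpow : (u * y) ^ (2 ^ m - 1) = u⁻¹ ^ 2 := by
    refine mul_right_cancel₀ (mul_ne_zero hu0 hy0) ?_
    rw [← pow_succ, Nat.sub_add_cancel Nat.one_le_two_pow, mul_pow,
      pow_two_pow_of_mem_unitCircle hu, hyK]
    field_simp
  rw [hpow, trN_eq_trM_add_pow, mul_pow, mem_fixedField.mp hμ, pow_right_comm, inv_pow u (2 ^ m),
    pow_two_pow_of_mem_unitCircle hu, inv_inv, ← mul_add, CharTwo.add_sq, add_comm]

variable (hcard : Fintype.card F = 2 ^ (2 * m))
include hcard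

lemma two_mul_walsh_gFun {l : F} (hl : l + l ^ 2 ^ m = 1) (μ : F) :
    2 * walsh m (gFun m l μ) 1
      = ∑ x : F, eps (trM m (x ^ (2 ^ m + 1)))
        + ∑ x : F, eps (trM m (x ^ (2 ^ m + 1)) + trN m x)
        - ∑ x : F, eps (trN m (μ * x ^ (2 ^ m - 1)))
        + ∑ x : F, eps (trN m (μ * x ^ (2 ^ m - 1)) + trN m x) := by
  simp only [walsh, gFun, one_mul, Finset.mul_sum, ← Finset.sum_add_distrib,
    ← Finset.sum_sub_distrib]
  refine Finset.sum_congr rfl fun x _ => ?_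
  have hx := pow_two_pow_add_one_mem_fixedField hcard x
  rw [trN_mul_eq_trM hl (mem_fixedField.mp hx)]
  exact two_mul_eps_select (trM_eq_zero_or_eq_one (mem_fixedField.mp hx))
    (trN_eq_zero_or_eq_one hcard _) (trN_eq_zero_or_eq_one hcard x)

variable (hm : 0 < m)
include hm

lemma sum_eps_trM_pow_two_pow_add_one : ∑ x : F, eps (trM m (x ^ (2 ^ m + 1))) = -2 ^ m := by
  have hinner : ∀ u ∈ unitCircle m F,
      ∑ y ∈ fixedFieldUnits m F, eps (trM m ((u * y) ^ (2 ^ m + 1))) = -1 := by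
    intro u hu
    calc _ = ∑ y ∈ fixedFieldUnits m F, eps (trM m (1 * y + 0)) := by
          refine Finset.sum_congr rfl fun y hy => ?_
          have hyK := (mem_fixedFieldUnits.mp hy).1
          rw [mul_pow_two_pow_add_one hu (mem_fixedField.mpr hyK), trM_sq_of_pow_eq hyK, one_mul,
            add_zero]
      _ = -1 := by
          simpa using sum_fixedFieldUnits_eps_trM_mul_add hcard hm (a := 1) (b := 0) (by simp)
            (by simp)
  rw [sum_univ_eq_add_sum_unitCircle_sum_fixedFieldUnits hcard hm, Finset.sum_congr rfl hinner,
    Finset.sum_const, card_unitCircle hcard]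
  simp

lemma sum_eps_trM_pow_two_pow_add_one_add_trN :
    ∑ x : F, eps (trM m (x ^ (2 ^ m + 1)) + trN m x) = -(-1) ^ m * 2 ^ m := by
  have hshift : ∀ x : F,
      trM m (x ^ (2 ^ m + 1)) + trN m x = trM m ((x + 1) ^ (2 ^ m + 1)) + m := by
    intro x
    have hexp : (x + 1) ^ (2 ^ m + 1) = x ^ (2 ^ m + 1) + (x + x ^ 2 ^ m) + 1 := by
      rw [pow_succ, add_pow_char_pow, one_pow, pow_succ]
      ring
    rw [hexp, trM_add, trM_add, trM_one, ← trN_eq_trM_add_pow, add_assoc,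
      CharTwo.add_self_eq_zero, add_zero]
  simp only [hshift]
  rw [show ∑ x : F, eps (trM m ((x + 1) ^ (2 ^ m + 1)) + (m : F))
      = ∑ x : F, eps (trM m (x ^ (2 ^ m + 1)) + (m : F)) from
    Fintype.sum_equiv (Equiv.addRight 1) _ _ fun _ => rfl, CharTwo.natCast_eq_ite]
  rcases Nat.even_or_odd m with hme | hmo
  · simp only [if_pos hme, add_zero, sum_eps_trM_pow_two_pow_add_one hcard hm, hme.neg_one_pow]
    ring
  · have hx : ∀ x : F, trM m (x ^ (2 ^ m + 1)) = 0 ∨ trM m (x ^ (2 ^ m + 1)) = 1 := fun x =>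
      trM_eq_zero_or_eq_one (mem_fixedField.mp (pow_two_pow_add_one_mem_fixedField hcard x))
    simp only [if_neg (Nat.not_even_iff_odd.mpr hmo), eps_add_one (hx _), Finset.sum_neg_distrib,
      sum_eps_trM_pow_two_pow_add_one hcard hm, hmo.neg_one_pow]
    ring

variable {μ : F} (hμ : μ ∈ fixedFieldUnits m F)
include hμ

lemma sum_eps_trN_mul_pow_two_pow_sub_one :
    ∑ x : F, eps (trN m (μ * x ^ (2 ^ m - 1))) = 1 - (2 ^ m - 1) * klooM m μ := by
  have hμK := mem_fixedField.mpr (mem_fixedFieldUnits.mp hμ).1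
  have hinner : ∀ u ∈ unitCircle m F,
      ∑ y ∈ fixedFieldUnits m F, eps (trN m (μ * (u * y) ^ (2 ^ m - 1)))
        = (2 ^ m - 1) * eps (trM m (μ * (u + u⁻¹) ^ 2)) := by
    intro u hu
    rw [Finset.sum_congr rfl fun y hy => by rw [trN_mul_mul_pow_two_pow_sub_one hμK hu hy],
      Finset.sum_const, card_fixedFieldUnits hcard hm, nsmul_eq_mul,
      Nat.cast_sub Nat.one_le_two_pow]
    simp
  rw [sum_univ_eq_add_sum_unitCircle_sum_fixedFieldUnits hcard hm, Finset.sum_congr rfl hinner,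
    ← Finset.mul_sum, sum_unitCircle_eps_trM_mul_add_inv_sq hcard hm hμ,
    zero_pow_two_pow_sub_one hm, mul_zero, trN_zero, eps_zero]
  ring

lemma sum_eps_trN_mul_pow_two_pow_sub_one_add_trN :
    ∑ x : F, eps (trN m (μ * x ^ (2 ^ m - 1)) + trN m x) = 2 ^ m + 1 + klooM m μ := by
  have hμK := mem_fixedField.mpr (mem_fixedFieldUnits.mp hμ).1
  have hinner : ∀ u ∈ unitCircle m F,
      ∑ y ∈ fixedFieldUnits m F, eps (trN m (μ * (u * y) ^ (2 ^ m - 1)) + trN m (u * y))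
        = (if u = 1 then 2 ^ m else 0) - eps (trM m (μ * (u + u⁻¹) ^ 2)) := by
    intro u hu
    have hc := add_inv_mem_fixedField_of_mem_unitCircle hu
    rw [Finset.sum_congr rfl fun y hy => by
        rw [trN_mul_mul_pow_two_pow_sub_one hμK hu hy, trN_mul_of_mem_unitCircle hu
          (mem_fixedField.mpr (mem_fixedFieldUnits.mp hy).1), ← trM_add, add_comm],
      sum_fixedFieldUnits_eps_trM_mul_add hcard hm hc
        (mul_mem_fixedField hμK (by simpa [sq] using mul_mem_fixedField hc hc))]
    by_cases hu1 : u = 1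
    · simp [hu1, CharTwo.add_self_eq_zero]
    · rw [if_neg ((add_inv_eq_zero_iff (ne_zero_of_mem_unitCircle hu)).not.mpr hu1), if_neg hu1]
      ring
  rw [sum_univ_eq_add_sum_unitCircle_sum_fixedFieldUnits hcard hm, Finset.sum_congr rfl hinner,
    Finset.sum_sub_distrib, Finset.sum_ite_eq', if_pos (by simp),
    sum_unitCircle_eps_trM_mul_add_inv_sq hcard hm hμ, zero_pow_two_pow_sub_one hm]
  simp
  ring

end WalshSums

theorem stmt17 (m : ℕ) (hm : 0 < m) (F : Type*) [Field F] [Fintype F] [DecidableEq F]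
    (hcard : Fintype.card F = 2 ^ (2 * m))
    (l : F) (hl : l + l ^ (2 ^ m) = 1)
    (μ : F) (hμK : μ ^ (2 ^ m) = μ) (hμ0 : μ ≠ 0) :
    (Odd m → walsh m (gFun m l μ) 1 = (2 ^ (m - 1) : ℤ) * (1 + klooM m μ)) ∧
    (Even m → walsh m (gFun m l μ) 1 = (2 ^ (m - 1) : ℤ) * (klooM m μ - 1)) := by
  have : CharP F 2 := ringChar.of_eq <| FiniteField.even_card_iff_char_two.mpr <| by
    simp [hcard, Nat.pow_mod, hm.ne']
  have hμ : μ ∈ fixedFieldUnits m F := mem_fixedFieldUnits.mpr ⟨hμK, hμ0⟩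
  have hq : (2 : ℤ) ^ m = 2 * 2 ^ (m - 1) := by rw [← pow_succ', Nat.sub_add_cancel hm]
  have hW := two_mul_walsh_gFun hcard hl μ
  rw [sum_eps_trM_pow_two_pow_add_one hcard hm, sum_eps_trM_pow_two_pow_add_one_add_trN hcard hm,
    sum_eps_trN_mul_pow_two_pow_sub_one hcard hm hμ,
    sum_eps_trN_mul_pow_two_pow_sub_one_add_trN hcard hm hμ, hq] at hW
  constructor
  · intro hmo
    rw [hmo.neg_one_pow] at hW
    linarith
  · intro hme
    rw [hme.neg_one_pow] at hW
    linarith
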